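/- Let G be a DAG on X whose cluster system satisfies (N3O), and let v be a vertex. Then v ∈ LCA_G(A) for some A ⊆ X with |A| = 2 if and only if |C_G(v)| ≥ 2 and C_G(u) ≠ C_G(v) for every child u of v. -/

import Mathlib

/-- A vertex is a leaf if it has no outgoing edge. -/
def IsLeaf {V : Type*} (E : V → V → Prop) (v : V) : Prop := ∀ u, ¬ E v u

/-- The cluster of `v`: the set of leaves reachable from `v` (descendant leaves). -/
def cluster {V : Type*} (E : V → V → Prop) (v : V) : Set V :=
  {x | IsLeaf E x ∧ Relation.ReflTransGen E v x}

/-- `v` is a least common ancestor of `A`: it is a common ancestor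
(`A ⊆ cluster E v`) and no strict descendant of `v` is a common ancestor. -/
def IsLCA {V : Type*} (E : V → V → Prop) (A : Set V) (v : V) : Prop :=
  A ⊆ cluster E v ∧ ∀ w, Relation.TransGen E v w → ¬ A ⊆ cluster E w

/-- Acyclicity of a directed graph. -/
def Acyclic {V : Type*} (E : V → V → Prop) : Prop := ∀ v, ¬ Relation.TransGen E v v

/-- Two sets overlap if their intersection is nonempty and neither contains
the other. -/
def Overlap {V : Type*} (M M' : Set V) : Prop :=
  M ∩ M' ≠ ∅ ∧ M ∩ M' ≠ M ∧ M ∩ M' ≠ M'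

lemma cluster_mono {V : Type*} (E : V → V → Prop) {a b : V}
    (h : Relation.ReflTransGen E a b) : cluster E b ⊆ cluster E a :=
  fun _ hx => ⟨hx.1, h.trans hx.2⟩

lemma cluster_child_subset {V : Type*} (E : V → V → Prop) {u w : V}
    (h : E u w) : cluster E w ⊆ cluster E u :=
  fun _ hx => ⟨hx.1, Relation.ReflTransGen.head h hx.2⟩

lemma mk_overlap {V : Type*} {M M' : Set V} {a b c : V}
    (ha : a ∈ M) (ha' : a ∈ M') (hb : b ∈ M) (hb' : b ∉ M')
    (hc : c ∈ M') (hc' : c ∉ M) : Overlap M M' := by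
  refine ⟨Set.Nonempty.ne_empty ⟨a, ha, ha'⟩, ?_, ?_⟩
  · rw [Ne, Set.inter_eq_left]
    exact fun h => hb' (h hb)
  · rw [Ne, Set.inter_eq_right]
    exact fun h => hc' (h hc)

lemma overlap_ne {V : Type*} {M M' : Set V} (h : Overlap M M') : M ≠ M' :=
  fun e => h.2.1 (by rw [e, Set.inter_self])

/-- In a DAG whose cluster system has no three pairwise overlapping clusters
(N3O), `v` is a 2-LCA vertex iff `|C(v)| ≥ 2` and no child of `v` has the same
cluster as `v`. -/
theorem N3O_twoLCA_characterization {V : Type*} [Fintype V] (E : V → V → Prop)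
    (hacyc : Acyclic E)
    (hN3O : ¬ ∃ C₁ C₂ C₃ : Set V,
      (∃ w, C₁ = cluster E w) ∧ (∃ w, C₂ = cluster E w) ∧ (∃ w, C₃ = cluster E w) ∧
      C₁ ≠ C₂ ∧ C₁ ≠ C₃ ∧ C₂ ≠ C₃ ∧
      Overlap C₁ C₂ ∧ Overlap C₁ C₃ ∧ Overlap C₂ C₃)
    (v : V) :
    (∃ A : Set V, A ⊆ {x | IsLeaf E x} ∧ A.ncard = 2 ∧ IsLCA E A v) ↔
      (2 ≤ (cluster E v).ncard ∧ ∀ u, E v u → cluster E u ≠ cluster E v) := by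
  constructor
  · rintro ⟨A, hAleaf, hA2, hsub, hmin⟩
    refine ⟨?_, ?_⟩
    · calc 2 = A.ncard := hA2.symm
        _ ≤ (cluster E v).ncard := Set.ncard_le_ncard hsub (Set.toFinite _)
    · intro u huv heq
      exact hmin u (Relation.TransGen.single huv) (heq ▸ hsub)
  · rintro ⟨hcard, hchild⟩
    set C := cluster E v with hC
    by_cases hcov : ∀ x ∈ C, ∀ y ∈ C, x ≠ y →
        ∃ u, E v u ∧ x ∈ cluster E u ∧ y ∈ cluster E u
    · exfalso
      -- P : pair-containing child clusters
      set P : Set (Set V) := {S | (∃ u, E v u ∧ S = cluster E u) ∧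
        ∃ a ∈ S, ∃ b ∈ S, a ≠ b} with hP
      have hPne : P.Nonempty := by
        obtain ⟨x0, hx0, y0, hy0, hxy0⟩ := (Set.one_lt_ncard (Set.toFinite C)).mp hcard
        obtain ⟨u0, hu0, hx0', hy0'⟩ := hcov x0 hx0 y0 hy0 hxy0
        exact ⟨cluster E u0, ⟨u0, hu0, rfl⟩, x0, hx0', y0, hy0', hxy0⟩
      obtain ⟨D, hDP, hDmax⟩ := Set.Finite.exists_maximalFor id P (Set.toFinite P) hPne
      obtain ⟨⟨uD, huD, hDeq⟩, a, haD, b, hbD, hab⟩ := hDP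
      have hDsubC : D ⊆ C := hDeq ▸ cluster_child_subset E huD
      have hDneC : D ≠ C := hDeq ▸ hchild uD huD
      obtain ⟨z, hzC, hzD⟩ : ∃ z ∈ C, z ∉ D := by
        by_contra h
        push_neg at h
        exact hDneC (Set.Subset.antisymm hDsubC h)
      -- Q : child clusters containing z and meeting D
      set Q : Set (Set V) := {S | (∃ u, E v u ∧ S = cluster E u) ∧
        z ∈ S ∧ (S ∩ D).Nonempty} with hQ
      have hQsubP : Q ⊆ P := by
        rintro S ⟨hScl, hzS, d, hdS, hdD⟩
        exact ⟨hScl, z, hzS, d, hdS, fun e => hzD (e ▸ hdD)⟩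
      have hQne : Q.Nonempty := by
        obtain ⟨u1, hu1, ha1, hz1⟩ := hcov a (hDsubC haD) z hzC (fun e => hzD (e ▸ haD))
        exact ⟨cluster E u1, ⟨u1, hu1, rfl⟩, hz1, a, ha1, haD⟩
      obtain ⟨F, hFQ, hFmax⟩ := Set.Finite.exists_maximalFor id Q (Set.toFinite Q) hQne
      obtain ⟨hFcl, hzF, d0, hd0F, hd0D⟩ := hFQ
      -- D ⊄ F
      obtain ⟨w, hwD, hwF⟩ : ∃ w ∈ D, w ∉ F := by
        by_contra h
        push_neg at h
        have : D = F := Set.Subset.antisymm h (hDmax (hQsubP ⟨hFcl, hzF, d0, hd0F, hd0D⟩) h)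
        exact hzD (this ▸ hzF)
      -- the child cluster covering {w, z}
      obtain ⟨u2, hu2, hw2, hz2⟩ := hcov w (hDsubC hwD) z hzC (fun e => hzD (e ▸ hwD))
      set G := cluster E u2 with hG
      have hGQ : G ∈ Q := ⟨⟨u2, hu2, rfl⟩, hz2, w, hw2, hwD⟩
      -- F ⊄ G
      obtain ⟨f, hfF, hfG⟩ : ∃ f ∈ F, f ∉ G := by
        by_contra h
        push_neg at h
        have : F = G := Set.Subset.antisymm h (hFmax hGQ h)
        exact hwF (this.symm ▸ hw2)
      -- D ⊄ G
      obtain ⟨e0, he0D, he0G⟩ : ∃ e0 ∈ D, e0 ∉ G := by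
        by_contra h
        push_neg at h
        have : D = G := Set.Subset.antisymm h (hDmax (hQsubP hGQ) h)
        exact hzD (this ▸ hz2)
      have o1 : Overlap D F := mk_overlap hd0D hd0F hwD hwF hzF hzD
      have o2 : Overlap D G := mk_overlap hwD hw2 he0D he0G hz2 hzD
      have o3 : Overlap F G := mk_overlap hzF hz2 hfF hfG hw2 hwF
      obtain ⟨uF, huF, hFeq⟩ := hFcl
      exact hN3O ⟨D, F, G, ⟨uD, hDeq⟩, ⟨uF, hFeq⟩,
        ⟨u2, rfl⟩, overlap_ne o1, overlap_ne o2, overlap_ne o3, o1, o2, o3⟩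
    · push_neg at hcov
      obtain ⟨x, hx, y, hy, hxy, hnc⟩ := hcov
      refine ⟨{x, y}, ?_, Set.ncard_pair hxy, ?_, ?_⟩
      · rintro t (rfl | rfl)
        · exact hx.1
        · exact hy.1
      · rintro t (rfl | rfl)
        · exact hx
        · exact hy
      · intro w hvw hsubw
        obtain ⟨u, hvu, huw⟩ := Relation.TransGen.head'_iff.mp hvw
        have hsubu : cluster E w ⊆ cluster E u := cluster_mono E huw
        exact hnc u hvu (hsubu (hsubw (Or.inl rfl))) (hsubu (hsubw (Or.inr rfl)))
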